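/- arXiv:2001.05989 — 5 statements merged into one kernel-verified Lean document; each statement's English description precedes it below -/
import Mathlib

section
/- Let X_1, ..., X_n, X_{n+1} be exchangeable random variables taking values in a measurable space Z, and let f : Z^{n+1} → [0,∞)^{n+1} be an equivariant measurable function (permuting the inputs permutes the outputs in the same way) such that the average of the n+1 output values is always at most 1. Then the expectation of the last coordinate of f(X_1, ..., X_{n+1}) is at most 1. -/
open MeasureTheory

/-- Validity of conformal e-predictors: if `X_1,...,X_{n+1}` are exchangeable
and `f` is an equivariant measurable function into nonnegative vectors whose
coordinates always average at most 1, then the last coordinate of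
`f(X_1,...,X_{n+1})` has expectation at most 1. -/
theorem conformal_e_predictor_validity
    {Ω : Type*} [MeasurableSpace Ω] (μ : Measure Ω) [IsProbabilityMeasure μ]
    {Z : Type*} [MeasurableSpace Z] (n : ℕ)
    (X : Fin (n + 1) → Ω → Z) (hXmeas : ∀ i, Measurable (X i))
    (hexch : ∀ π : Equiv.Perm (Fin (n + 1)),
      Measure.map (fun ω => fun i => X (π i) ω) μ
        = Measure.map (fun ω => fun i => X i ω) μ)
    (f : (Fin (n + 1) → Z) → Fin (n + 1) → ℝ)
    (hfmeas : Measurable f)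
    (hequiv : ∀ (π : Equiv.Perm (Fin (n + 1))) (z : Fin (n + 1) → Z),
      f (fun i => z (π i)) = fun i => f z (π i))
    (hnonneg : ∀ z i, 0 ≤ f z i)
    (havg : ∀ z, (1 / ((n : ℝ) + 1)) * ∑ i, f z i ≤ 1) :
    ∫ ω, f (fun i => X i ω) (Fin.last n) ∂μ ≤ 1 := by
  have hpos : (0:ℝ) < (n:ℝ) + 1 := by positivity
  have hsum : ∀ z, ∑ i, f z i ≤ (n:ℝ) + 1 := by
    intro z
    have := havg z
    rw [div_mul_eq_mul_div, one_mul, div_le_one hpos] at this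
    exact this
  have hbd : ∀ z i, f z i ≤ (n:ℝ) + 1 := by
    intro z i
    refine le_trans ?_ (hsum z)
    exact Finset.single_le_sum (fun j _ => hnonneg z j) (Finset.mem_univ i)
  -- measurability of ω ↦ (fun i => X i ω)
  have hXvec : Measurable (fun ω => fun i => X i ω) :=
    measurable_pi_lambda _ (fun i => hXmeas i)
  have hXvecπ : ∀ π : Equiv.Perm (Fin (n+1)),
      Measurable (fun ω => fun i => X (π i) ω) := fun π =>
    measurable_pi_lambda _ (fun i => hXmeas (π i))
  have hcoord : ∀ i : Fin (n+1), Measurable (fun z => f z i) := fun i =>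
    (measurable_pi_apply i).comp hfmeas
  -- each coordinate integrable
  have hint : ∀ i : Fin (n+1),
      Integrable (fun ω => f (fun j => X j ω) i) μ := by
    intro i
    refine Integrable.mono' (integrable_const ((n:ℝ)+1))
      ((hcoord i).comp hXvec).aestronglyMeasurable ?_
    filter_upwards with ω
    rw [Real.norm_eq_abs, abs_of_nonneg (hnonneg _ i)]
    exact hbd _ i
  -- each coordinate has the same expectation as the last
  have key : ∀ i : Fin (n+1),
      ∫ ω, f (fun j => X j ω) i ∂μ = ∫ ω, f (fun j => X j ω) (Fin.last n) ∂μ := by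
    intro i
    set π := Equiv.swap i (Fin.last n) with hπ
    have h1 : ∫ ω, f (fun j => X j ω) (Fin.last n) ∂μ
        = ∫ z, f z (Fin.last n) ∂(Measure.map (fun ω => fun j => X j ω) μ) := by
      rw [integral_map hXvec.aemeasurable (hcoord (Fin.last n)).aestronglyMeasurable]
    have h2 : ∫ z, f z (Fin.last n) ∂(Measure.map (fun ω => fun j => X (π j) ω) μ)
        = ∫ ω, f (fun j => X (π j) ω) (Fin.last n) ∂μ := by
      rw [integral_map (hXvecπ π).aemeasurable (hcoord (Fin.last n)).aestronglyMeasurable]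
    have h3 : ∀ ω, f (fun j => X (π j) ω) (Fin.last n)
        = f (fun j => X j ω) i := by
      intro ω
      have := congrFun (hequiv π (fun j => X j ω)) (Fin.last n)
      simpa [hπ, Equiv.swap_apply_right] using this
    calc ∫ ω, f (fun j => X j ω) i ∂μ
        = ∫ ω, f (fun j => X (π j) ω) (Fin.last n) ∂μ := by
          simp_rw [h3]
      _ = ∫ z, f z (Fin.last n) ∂(Measure.map (fun ω => fun j => X (π j) ω) μ) := h2.symm
      _ = ∫ z, f z (Fin.last n) ∂(Measure.map (fun ω => fun j => X j ω) μ) := by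
          rw [hexch π]
      _ = ∫ ω, f (fun j => X j ω) (Fin.last n) ∂μ := h1.symm
  have hsumint : ∫ ω, ∑ i, f (fun j => X j ω) i ∂μ
      = ∑ i, ∫ ω, f (fun j => X j ω) i ∂μ :=
    integral_finset_sum _ (fun i _ => hint i)
  have hle : ∫ ω, ∑ i, f (fun j => X j ω) i ∂μ ≤ (n:ℝ) + 1 := by
    calc ∫ ω, ∑ i, f (fun j => X j ω) i ∂μ
        ≤ ∫ _ : Ω, ((n:ℝ) + 1) ∂μ := by
          refine integral_mono (integrable_finset_sum _ (fun i _ => hint i))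
            (integrable_const _) (fun ω => hsum _)
      _ = (n:ℝ) + 1 := by simp
  have : ((n:ℝ) + 1) * ∫ ω, f (fun j => X j ω) (Fin.last n) ∂μ ≤ (n:ℝ) + 1 := by
    calc ((n:ℝ) + 1) * ∫ ω, f (fun j => X j ω) (Fin.last n) ∂μ
        = ∑ _i : Fin (n+1), ∫ ω, f (fun j => X j ω) (Fin.last n) ∂μ := by
          simp [Finset.sum_const, Finset.card_univ, mul_comm]
      _ = ∑ i, ∫ ω, f (fun j => X j ω) i ∂μ := by
          exact Finset.sum_congr rfl (fun i _ => (key i).symm)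
      _ = ∫ ω, ∑ i, f (fun j => X j ω) i ∂μ := hsumint.symm
      _ ≤ (n:ℝ) + 1 := hle
  nlinarith [this, hpos]
end

section
/- Let Z_1, ..., Z_{n+1} be IID random variables in a measurable space Z. Let A : Z^{n-c} × Z → Σ be a measurable function and N : Σ^{c+1} → [0,∞)^{c+1} an equivariant measurable function whose outputs always average at most 1. Define σ_i = A(Z_1,...,Z_{n-c}; Z_{n-c+i}) for i = 1,...,c and σ* = A(Z_1,...,Z_{n-c}; Z_{n+1}), and let α* be the last coordinate of N(σ_1,...,σ_c,σ*). Then E[α*] ≤ 1. -/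
open MeasureTheory ProbabilityTheory

/-!
The sample of an IID sequence has a product law, which is invariant under permutations of the
coordinates. Permuting the calibration and test observations among themselves permutes the
summaries accordingly, so the summaries are exchangeable. For an exchangeable vector and an
equivariant `N`, all coordinates of `N` have the same expectation; since their sum is at most
`c + 1`, each of them has expectation at most `1`.
-/

theorem MeasurableEquiv.coe_piCongrLeft_perm_symm {ι α : Type*} [MeasurableSpace α]
    (π : Equiv.Perm ι) :
    ⇑(MeasurableEquiv.piCongrLeft (fun _ : ι => α) π.symm) = fun x => x ∘ π := by
  ext x i
  simp [MeasurableEquiv.coe_piCongrLeft, Equiv.piCongrLeft_apply]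

namespace MeasureTheory.Measure

variable {ι α : Type*} [MeasurableSpace α]

def IsExchangeable (P : Measure (ι → α)) : Prop :=
  ∀ π : Equiv.Perm ι, P.map (fun x => x ∘ π) = P

theorem isExchangeable_pi [Fintype ι] (ν : Measure α) [SigmaFinite ν] :
    IsExchangeable (Measure.pi fun _ : ι => ν) := by
  intro π
  rw [← MeasurableEquiv.coe_piCongrLeft_perm_symm]
  exact (measurePreserving_piCongrLeft (fun _ : ι => ν) π.symm).map_eq

theorem IsExchangeable.map {κ β : Type*} [MeasurableSpace β] {P : Measure (ι → α)}
    (hP : IsExchangeable P) {G : (ι → α) → κ → β} (hG : Measurable G)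
    (hGequiv : ∀ π : Equiv.Perm κ, ∃ e : Equiv.Perm ι, ∀ x, G (x ∘ e) = G x ∘ π) :
    IsExchangeable (P.map G) := by
  intro π
  obtain ⟨e, hGe⟩ := hGequiv π
  have hπ : Measurable fun y : κ → β => y ∘ π := by fun_prop
  have he : Measurable fun x : ι → α => x ∘ e := by fun_prop
  calc (P.map G).map (fun y => y ∘ π) = P.map (fun x => G x ∘ π) := map_map hπ hG
    _ = (P.map fun x => x ∘ e).map G := by
        rw [map_map hG he]; congr 1; funext x; exact (hGe x).symm
    _ = P.map G := by rw [hP e]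

theorem IsExchangeable.integral_apply_eq {P : Measure (ι → α)} (hP : IsExchangeable P)
    {N : (ι → α) → ι → ℝ}
    (hNequiv : ∀ (π : Equiv.Perm ι) x, N (x ∘ π) = N x ∘ π) (i j : ι) :
    ∫ x, N x i ∂P = ∫ x, N x j ∂P := by
  classical
  let π := MeasurableEquiv.piCongrLeft (fun _ : ι => α) (Equiv.swap i j).symm
  have hπ : ⇑π = fun x => x ∘ Equiv.swap i j := MeasurableEquiv.coe_piCongrLeft_perm_symm _
  calc ∫ x, N x i ∂P = ∫ x, N x i ∂(P.map π) := by rw [hπ, hP]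
    _ = ∫ x, N (x ∘ Equiv.swap i j) i ∂P := by rw [π.measurableEmbedding.integral_map, hπ]
    _ = ∫ x, N x j ∂P := by simp only [hNequiv, Function.comp_apply, Equiv.swap_apply_left]

theorem IsExchangeable.integral_apply_le_one [Fintype ι] {P : Measure (ι → α)}
    [IsProbabilityMeasure P]
    (hP : IsExchangeable P) {N : (ι → α) → ι → ℝ} (hNmeas : Measurable N)
    (hNequiv : ∀ (π : Equiv.Perm ι) x, N (x ∘ π) = N x ∘ π)
    (hNnonneg : ∀ x i, 0 ≤ N x i) (hNsum : ∀ x, ∑ i, N x i ≤ Fintype.card ι) (i : ι) :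
    ∫ x, N x i ∂P ≤ 1 := by
  have hbound : ∀ x j, ‖N x j‖ ≤ Fintype.card ι := fun x j => by
    rw [Real.norm_of_nonneg (hNnonneg x j)]
    exact (Finset.single_le_sum (fun k _ => hNnonneg x k) (Finset.mem_univ j)).trans (hNsum x)
  have hint : ∀ j, Integrable (fun x => N x j) P := fun j =>
    .of_bound ((measurable_pi_apply j).comp hNmeas).aestronglyMeasurable _
      (.of_forall fun x => hbound x j)
  have hcard : (0 : ℝ) < Fintype.card ι := Nat.cast_pos.2 (Fintype.card_pos_iff.2 ⟨i⟩)
  refine le_of_mul_le_mul_left ?_ hcard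
  calc (Fintype.card ι : ℝ) * ∫ x, N x i ∂P = ∑ j, ∫ x, N x j ∂P := by
        simp [hP.integral_apply_eq hNequiv _ i]
    _ = ∫ x, ∑ j, N x j ∂P := (integral_finsetSum _ fun j _ => hint j).symm
    _ ≤ ∫ _, (Fintype.card ι : ℝ) ∂P :=
        integral_mono (integrable_finsetSum _ fun j _ => hint j) (integrable_const _) hNsum
    _ = Fintype.card ι * 1 := by simp

end MeasureTheory.Measure

theorem ProbabilityTheory.iIndepFun.map_fun_eq_pi_of_identDistrib
    {Ω ι α : Type*} [MeasurableSpace Ω] {μ : Measure Ω} [IsProbabilityMeasure μ]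
    [mα : MeasurableSpace α] [Fintype ι] {X : ι → Ω → α} (hXmeas : ∀ i, Measurable (X i))
    (hindep : iIndepFun (m := fun _ => mα) X μ) (i₀ : ι)
    (hident : ∀ i, IdentDistrib (X i) (X i₀) μ μ) :
    μ.map (fun ω i => X i ω) = Measure.pi fun _ => μ.map (X i₀) := by
  rw [hindep.map_fun_eq_pi_map fun i => (hXmeas i).aemeasurable]
  simp_rw [fun i => (hident i).map_eq]

section SplitConformal

variable {α S : Type*} {t m : ℕ}

def splitConformalScores (A : (Fin t → α) → α → S) (x : Fin (t + m) → α) : Fin m → S :=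
  fun i => A (fun j => x (Fin.castAdd m j)) (x (Fin.natAdd t i))

theorem splitConformalScores_comp_permCongr (A : (Fin t → α) → α → S) (π : Equiv.Perm (Fin m))
    (x : Fin (t + m) → α) :
    splitConformalScores A (x ∘ finSumFinEquiv.permCongr ((Equiv.refl _).sumCongr π))
      = splitConformalScores A x ∘ π := by
  ext i
  simp [splitConformalScores, Equiv.permCongr_apply]

theorem measurable_splitConformalScores [MeasurableSpace α] [MeasurableSpace S]
    {A : (Fin t → α) → α → S} (hA : Measurable fun p : (Fin t → α) × α => A p.1 p.2) :
    Measurable (splitConformalScores (m := m) A) :=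
  measurable_pi_lambda _ fun i =>
    hA.comp (f := fun x : Fin (t + m) → α => (fun j => x (Fin.castAdd m j), x (Fin.natAdd t i)))
      (by fun_prop)

end SplitConformal

/-- Validity of split conformal e-predictors: with an IID sample
`Z_1,...,Z_{t+c+1}` (training proper of size `t`, calibration set of size `c`,
and one test observation), a split conformity measure `A` and an equivariant
normalizing transformation `N` whose nonnegative outputs average at most 1,
the e-value assigned to the test observation has expectation at most 1. -/
theorem split_conformal_e_predictor_validity
    {Ω : Type*} [MeasurableSpace Ω] (μ : Measure Ω) [IsProbabilityMeasure μ]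
    {ZZ : Type*} [mZZ : MeasurableSpace ZZ] {S : Type*} [MeasurableSpace S]
    (t c : ℕ)
    (Z : Fin (t + c + 1) → Ω → ZZ) (hZmeas : ∀ i, Measurable (Z i))
    (hindep : iIndepFun (m := fun _ => mZZ) Z μ)
    (hident : ∀ i j, IdentDistrib (Z i) (Z j) μ μ)
    (A : (Fin t → ZZ) → ZZ → S)
    (hAmeas : Measurable (fun p : (Fin t → ZZ) × ZZ => A p.1 p.2))
    (N : (Fin (c + 1) → S) → Fin (c + 1) → ℝ)
    (hNmeas : Measurable N)
    (hNequiv : ∀ (π : Equiv.Perm (Fin (c + 1))) (σ : Fin (c + 1) → S),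
      N (fun i => σ (π i)) = fun i => N σ (π i))
    (hNnonneg : ∀ σ i, 0 ≤ N σ i)
    (hNavg : ∀ σ, (1 / ((c : ℝ) + 1)) * ∑ i, N σ i ≤ 1)
    -- the summaries: calibration summaries followed by the test summary
    (σ : Ω → Fin (c + 1) → S)
    (hσ : ∀ ω, σ ω = fun i : Fin (c + 1) =>
      A (fun j : Fin t => Z ⟨j, by omega⟩ ω) (Z ⟨t + i, by omega⟩ ω)) :
    ∫ ω, N (σ ω) (Fin.last c) ∂μ ≤ 1 := by
  -- `Fin (t + (c + 1))` is definitionally `Fin (t + c + 1)`, split as training set proper and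
  -- calibration/test block
  let sample : Ω → Fin (t + (c + 1)) → ZZ := fun ω i => Z i ω
  have hsample : Measurable sample := measurable_pi_lambda _ hZmeas
  have hlaw : μ.map sample = Measure.pi fun _ => μ.map (Z 0) :=
    hindep.map_fun_eq_pi_of_identDistrib hZmeas 0 fun i => hident i 0
  have hscores := measurable_splitConformalScores (m := c + 1) hAmeas
  have hσ_eq : σ = splitConformalScores A ∘ sample := funext hσ
  have hσmeas : Measurable σ := hσ_eq ▸ hscores.comp hsample
  have hexch : (μ.map σ).IsExchangeable := by
    rw [hσ_eq, ← Measure.map_map hscores hsample, hlaw]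
    exact (Measure.isExchangeable_pi _).map hscores fun π =>
      ⟨_, splitConformalScores_comp_permCongr A π⟩
  have hNsum : ∀ x, ∑ i, N x i ≤ Fintype.card (Fin (c + 1)) := fun x => by
    have := hNavg x
    rw [one_div, inv_mul_le_iff₀ (by positivity), mul_one] at this
    simpa using this
  have : IsProbabilityMeasure (μ.map σ) := Measure.isProbabilityMeasure_map hσmeas.aemeasurable
  rw [← integral_map (f := fun x => N x (Fin.last c)) hσmeas.aemeasurable
    ((measurable_pi_apply _).comp hNmeas).aestronglyMeasurable]
  exact hexch.integral_apply_le_one hNmeas hNequiv hNnonneg hNsum _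
end

section
/- If P_1, ..., P_K are p-values (possibly dependent), then P(2·(1/K)∑_{k=1}^K P_k ≤ ε) ≤ ε for all ε ∈ (0,1]; that is, twice the arithmetic mean of arbitrary p-values is a p-value. -/
/-! Truncate each p-value at `ε`: since `μ {P ≤ s} ≤ s`, the layer cake formula gives
`𝔼 (ε - Pₖ)⁺ ≤ ∫₀^ε (ε - t) dt = ε² / 2`, hence the same bound for the average `g` of
the `(ε - Pₖ)⁺`. Wherever twice the mean of the `Pₖ` is at most `ε`, we have `g ≥ ε / 2`,
so by Markov's inequality this event has probability at most `(ε² / 2) / (ε / 2) = ε`. -/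

open MeasureTheory

def IsPValue {Ω : Type*} [MeasurableSpace Ω] (μ : Measure Ω) (P : Ω → ℝ) : Prop :=
  ∀ ε ∈ Set.Ioc (0 : ℝ) 1, μ.real {ω | P ω ≤ ε} ≤ ε

section

variable {Ω : Type*} [MeasurableSpace Ω] {μ : Measure Ω}

lemma integrable_posPart_const_sub [IsFiniteMeasure μ] {P : Ω → ℝ} (hPm : AEMeasurable P μ)
    (hP0 : 0 ≤ᵐ[μ] P) (ε : ℝ) : Integrable (fun ω => (ε - P ω)⁺) μ := by
  refine Integrable.of_bound (hPm.const_sub ε).posPart.aestronglyMeasurable ε⁺ ?_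
  filter_upwards [hP0] with ω hω
  rw [Real.norm_of_nonneg (posPart_nonneg _)]
  exact sup_le_sup_right (by simpa using hω) 0

lemma integral_mean_le {ι : Type*} [Fintype ι] [Nonempty ι] {f : ι → Ω → ℝ}
    (hf : ∀ i, Integrable (f i) μ) {c : ℝ} (hc : ∀ i, ∫ ω, f i ω ∂μ ≤ c) :
    ∫ ω, (1 / (Fintype.card ι : ℝ)) * ∑ i, f i ω ∂μ ≤ c := by
  have hcard : (0 : ℝ) < Fintype.card ι := by exact_mod_cast Fintype.card_pos
  rw [integral_const_mul, integral_finsetSum _ fun i _ => hf i, one_div_mul_eq_div,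
    div_le_iff₀ hcard]
  simpa [mul_comm] using Finset.sum_le_sum fun i (_ : i ∈ Finset.univ) => hc i

lemma sub_mean_le_mean_posPart_sub {ι : Type*} [Fintype ι] [Nonempty ι] (x : ι → ℝ) (ε : ℝ) :
    ε - (1 / (Fintype.card ι : ℝ)) * ∑ i, x i ≤
      (1 / (Fintype.card ι : ℝ)) * ∑ i, (ε - x i)⁺ := by
  have hcard : (Fintype.card ι : ℝ) ≠ 0 := by exact_mod_cast Fintype.card_ne_zero
  calc ε - (1 / (Fintype.card ι : ℝ)) * ∑ i, x i =
        (1 / (Fintype.card ι : ℝ)) * ∑ i, (ε - x i) := by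
        rw [Finset.sum_sub_distrib, mul_sub, Finset.sum_const, Finset.card_univ, nsmul_eq_mul]
        field_simp
    _ ≤ (1 / (Fintype.card ι : ℝ)) * ∑ i, (ε - x i)⁺ := by gcongr with i; exact le_posPart _

end

namespace IsPValue

variable {Ω : Type*} [MeasurableSpace Ω] {μ : Measure Ω} [IsFiniteMeasure μ] {P : Ω → ℝ}

theorem integral_posPart_sub_le (hP : IsPValue μ P) (hPm : AEMeasurable P μ)
    (hP0 : 0 ≤ᵐ[μ] P) {ε : ℝ} (hε : ε ∈ Set.Ioc 0 1) : ∫ ω, (ε - P ω)⁺ ∂μ ≤ ε ^ 2 / 2 := by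
  obtain ⟨hε0, hε1⟩ := hε
  have hbound : ∀ᵐ ω ∂μ, (ε - P ω)⁺ ≤ ε := by
    filter_upwards [hP0] with ω (hω : 0 ≤ P ω)
    exact sup_le (by linarith) hε0.le
  -- At `t = ε` the integrand is `μ {P ≤ 0}`, which the p-value property does not bound: use `Ioo`.
  calc ∫ ω, (ε - P ω)⁺ ∂μ = ∫ t in Set.Ioo 0 ε, μ.real {ω | t ≤ (ε - P ω)⁺} := by
        rw [(integrable_posPart_const_sub hPm hP0 ε).integral_eq_integral_Ioc_meas_le
          (ae_of_all _ fun _ => posPart_nonneg _) hbound, integral_Ioc_eq_integral_Ioo]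
    _ ≤ ∫ t in Set.Ioo 0 ε, (ε - t) := by
        refine integral_mono_of_nonneg (ae_of_all _ fun _ => measureReal_nonneg)
          ((continuous_const.sub continuous_id).integrableOn_Icc.mono_set
            Set.Ioo_subset_Icc_self) ?_
        refine ae_restrict_of_forall_mem measurableSet_Ioo fun t ⟨ht0, htε⟩ => ?_
        calc μ.real {ω | t ≤ (ε - P ω)⁺} ≤ μ.real {ω | P ω ≤ ε - t} := by
              refine measureReal_mono fun ω (hω : t ≤ (ε - P ω) ⊔ 0) => ?_
              have : t ≤ ε - P ω := (le_sup_iff.1 hω).resolve_right (not_le.2 ht0)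
              show P ω ≤ ε - t
              linarith
          _ ≤ ε - t := hP _ ⟨by linarith, by linarith⟩
    _ = ε ^ 2 / 2 := by
        rw [← integral_Ioc_eq_integral_Ioo, ← intervalIntegral.integral_of_le hε0.le,
          intervalIntegral.integral_sub intervalIntegrable_const
            intervalIntegral.intervalIntegrable_id]
        simp only [intervalIntegral.integral_const, integral_id, smul_eq_mul, sub_zero]
        ring

end IsPValue

/-- Rüschendorf's result: twice the arithmetic mean of arbitrary (possibly
dependent) p-values is a p-value. -/
theorem twice_arith_mean_of_pvalues_is_pvalue
    {Ω : Type*} [MeasurableSpace Ω] (μ : Measure Ω) [IsProbabilityMeasure μ]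
    (K : ℕ) (hK : 1 ≤ K) (P : Fin K → Ω → ℝ)
    (hmeas : ∀ k, Measurable (P k))
    (hnonneg : ∀ k ω, 0 ≤ P k ω)
    (hpval : ∀ k, ∀ ε ∈ Set.Ioc (0 : ℝ) 1, (μ {ω | P k ω ≤ ε}).toReal ≤ ε) :
    ∀ ε ∈ Set.Ioc (0 : ℝ) 1,
      (μ {ω | 2 * ((1 / (K : ℝ)) * ∑ k, P k ω) ≤ ε}).toReal ≤ ε := by
  intro ε hε
  have : Nonempty (Fin K) := ⟨⟨0, hK⟩⟩
  set g : Ω → ℝ := fun ω => (1 / (K : ℝ)) * ∑ k, (ε - P k ω)⁺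
  have hintegrable k : Integrable (fun ω => (ε - P k ω)⁺) μ :=
    integrable_posPart_const_sub (hmeas k).aemeasurable (ae_of_all _ (hnonneg k)) ε
  have hg_int : ∫ ω, g ω ∂μ ≤ ε ^ 2 / 2 := by
    simpa [g] using integral_mean_le hintegrable fun k =>
      IsPValue.integral_posPart_sub_le (hpval k) (hmeas k).aemeasurable
        (ae_of_all _ (hnonneg k)) hε
  have hg_ge : {ω | 2 * ((1 / (K : ℝ)) * ∑ k, P k ω) ≤ ε} ⊆ {ω | ε / 2 ≤ g ω} := by
    intro ω (hω : 2 * ((1 / (K : ℝ)) * ∑ k, P k ω) ≤ ε)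
    have := sub_mean_le_mean_posPart_sub (P · ω) ε
    rw [Fintype.card_fin] at this
    exact (by linarith : ε / 2 ≤ g ω)
  have hg_nonneg : 0 ≤ᵐ[μ] g := ae_of_all _ fun ω =>
    mul_nonneg (by positivity) (Finset.sum_nonneg fun k _ => posPart_nonneg _)
  refine le_of_mul_le_mul_left ?_ (half_pos hε.1)
  calc ε / 2 * μ.real {ω | 2 * ((1 / (K : ℝ)) * ∑ k, P k ω) ≤ ε}
      ≤ ε / 2 * μ.real {ω | ε / 2 ≤ g ω} :=
        mul_le_mul_of_nonneg_left (measureReal_mono hg_ge (measure_ne_top μ _)) (half_pos hε.1).le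
    _ ≤ ∫ ω, g ω ∂μ := mul_meas_ge_le_integral_of_nonneg hg_nonneg
        ((integrable_finsetSum _ fun k _ => hintegrable k).const_mul _) (ε / 2)
    _ ≤ ε / 2 * ε := by linarith
end

section
/- The constant 2 in Rüschendorf's merging rule cannot be improved for K = 2: for every c < 2 there exist two p-values P_1, P_2 (on a suitable probability space) and some ε ∈ (0,1] with P(c·(P_1+P_2)/2 ≤ ε) > ε. -/
open MeasureTheory

/-- Optimality of the constant 2 in Rüschendorf's merging rule for `K = 2`:
for every `c < 2` there exist two p-values `P_1, P_2` and some `ε ∈ (0,1]`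
such that `P(c · (P_1 + P_2)/2 ≤ ε) > ε`. -/
theorem ruschendorf_constant_two_optimal (c : ℝ) (hc : c < 2) :
    ∃ (Ω : Type) (_ : MeasurableSpace Ω) (μ : Measure Ω),
      IsProbabilityMeasure μ ∧
      ∃ P₁ P₂ : Ω → ℝ, Measurable P₁ ∧ Measurable P₂ ∧
        (∀ ω, 0 ≤ P₁ ω) ∧ (∀ ω, 0 ≤ P₂ ω) ∧
        (∀ ε ∈ Set.Ioc (0 : ℝ) 1, (μ {ω | P₁ ω ≤ ε}).toReal ≤ ε) ∧
        (∀ ε ∈ Set.Ioc (0 : ℝ) 1, (μ {ω | P₂ ω ≤ ε}).toReal ≤ ε) ∧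
        ∃ ε ∈ Set.Ioc (0 : ℝ) 1,
          ε < (μ {ω | c * (P₁ ω + P₂ ω) / 2 ≤ ε}).toReal := by
  refine ⟨ℝ, inferInstance, volume.restrict (Set.Icc 0 1), ⟨by simp⟩,
    (fun ω => max ω 0), (fun ω => max (1 - ω) 0),
    measurable_id.max measurable_const,
    (measurable_const.sub measurable_id).max measurable_const,
    fun ω => le_max_right _ _, fun ω => le_max_right _ _, ?_, ?_, ?_⟩
  · intro ε ⟨hε0, hε1⟩
    have hset : {ω : ℝ | max ω 0 ≤ ε} = Set.Iic ε := by
      ext ω; simp [max_le_iff, hε0.le]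
    rw [hset, Measure.restrict_apply measurableSet_Iic]
    have : Set.Iic ε ∩ Set.Icc 0 1 = Set.Icc 0 ε := by
      ext ω
      simp only [Set.mem_inter_iff, Set.mem_Iic, Set.mem_Icc]
      constructor
      · rintro ⟨h1, h2, h3⟩; exact ⟨h2, h1⟩
      · rintro ⟨h1, h2⟩; exact ⟨h2, h1, le_trans h2 hε1⟩
    rw [this, Real.volume_Icc, ENNReal.toReal_ofReal (by linarith)]
    linarith
  · intro ε ⟨hε0, hε1⟩
    have hset : {ω : ℝ | max (1 - ω) 0 ≤ ε} = Set.Ici (1 - ε) := by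
      ext ω; simp only [Set.mem_setOf_eq, Set.mem_Ici, max_le_iff]
      constructor
      · rintro ⟨h1, _⟩; linarith
      · intro h; exact ⟨by linarith, hε0.le⟩
    rw [hset, Measure.restrict_apply measurableSet_Ici]
    have : Set.Ici (1 - ε) ∩ Set.Icc 0 1 = Set.Icc (1 - ε) 1 := by
      ext ω
      simp only [Set.mem_inter_iff, Set.mem_Ici, Set.mem_Icc]
      constructor
      · rintro ⟨h1, _, h3⟩; exact ⟨h1, h3⟩
      · rintro ⟨h1, h2⟩; exact ⟨h1, by linarith, h2⟩
    rw [this, Real.volume_Icc, ENNReal.toReal_ofReal (by linarith)]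
    linarith
  · refine ⟨max (1/2) ((c/2 + 1)/2), ⟨lt_of_lt_of_le (by norm_num) (le_max_left _ _),
      max_le (by norm_num) (by linarith)⟩, ?_⟩
    set ε := max (1/2) ((c/2 + 1)/2) with hεdef
    have hεlt1 : ε < 1 := max_lt (by norm_num) (by linarith)
    have hc2 : c / 2 ≤ ε := by
      rcases le_or_gt c 1 with h | h
      · exact le_trans (by linarith) (le_max_left _ _)
      · exact le_trans (by linarith) (le_max_right _ _)
    have hsub : Set.Icc (0:ℝ) 1 ⊆ {ω : ℝ | c * (max ω 0 + max (1 - ω) 0) / 2 ≤ ε} := by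
      intro ω hω
      simp only [Set.mem_Icc] at hω
      have h1 : max ω 0 = ω := max_eq_left hω.1
      have h2 : max (1 - ω) 0 = 1 - ω := max_eq_left (by linarith [hω.2])
      simp only [Set.mem_setOf_eq, h1, h2]
      ring_nf
      linarith
    have hmeas : MeasurableSet {ω : ℝ | c * (max ω 0 + max (1 - ω) 0) / 2 ≤ ε} := by
      apply measurableSet_le _ measurable_const
      exact (measurable_const.mul ((measurable_id.max measurable_const).add
        ((measurable_const.sub measurable_id).max measurable_const))).div_const 2
    rw [Measure.restrict_apply hmeas, Set.inter_eq_right.mpr hsub, Real.volume_Icc]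
    norm_num
    exact hεlt1
end

section
/- Let (e_n)_{n≥1} be a sequence of nonnegative random variables adapted to a filtration (F_n) such that E[e_n | F_{n-1}] ≤ 1 almost surely for all n, and suppose the e_n are uniformly bounded by a constant C. Then almost surely limsup_{n→∞} (1/n)∑_{i=1}^n e_i ≤ 1. -/
/-!
Write `c i = E[e i | F (i-1)] ≤ 1`. The martingale `∑_{i ≤ n} (e i - c i) / i` has increments
bounded by `2C / i`; increments of a martingale are orthogonal in `L²`, so it is bounded in `L²`
by `4C² ∑ 1/i²` and converges almost surely. Kronecker's lemma turns this into
`(1/n) ∑_{i ≤ n} (e i - c i) → 0`, and `e i ≤ (e i - c i) + 1` gives the bound on the limsup.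
-/

open MeasureTheory Filter Finset Topology

/-- Kronecker's lemma. -/
theorem tendsto_cesaro_zero_of_tendsto_sum_div_succ {u : ℕ → ℝ} {l : ℝ}
    (h : Tendsto (fun n ↦ ∑ i ∈ range n, u i / (i + 1)) atTop (𝓝 l)) :
    Tendsto (fun n : ℕ ↦ (n : ℝ)⁻¹ * ∑ i ∈ range n, u i) atTop (𝓝 0) := by
  set B : ℕ → ℝ := fun n ↦ ∑ i ∈ range n, u i / (i + 1)
  have abel : ∀ n : ℕ, ∑ i ∈ range n, u i = n * B n - ∑ k ∈ range n, B k := by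
    intro n
    induction n with
    | zero => simp
    | succ n ih =>
      have hB : B (n + 1) = B n + u n / (n + 1) := sum_range_succ _ _
      rw [sum_range_succ, ih, sum_range_succ, hB]
      push_cast
      field_simp
      ring
  have h' : Tendsto (fun n : ℕ ↦ B n - (n : ℝ)⁻¹ * ∑ k ∈ range n, B k) atTop (𝓝 (l - l)) :=
    h.sub h.cesaro
  rw [sub_self] at h'
  refine h'.congr' ?_
  filter_upwards [eventually_ne_atTop 0] with n hn
  rw [abel, mul_sub, ← mul_assoc, inv_mul_cancel₀ (Nat.cast_ne_zero.2 hn), one_mul]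

theorem limsup_cesaro_le_of_le_add {a d : ℕ → ℝ} {c : ℝ} (ha : ∀ i, 0 ≤ a i)
    (had : ∀ i, a i ≤ d i + c)
    (hd : Tendsto (fun n : ℕ ↦ (n : ℝ)⁻¹ * ∑ i ∈ range n, d i) atTop (𝓝 0)) :
    limsup (fun n : ℕ ↦ (n : ℝ)⁻¹ * ∑ i ∈ range n, a i) atTop ≤ c := by
  have hlim : Tendsto (fun n : ℕ ↦ (n : ℝ)⁻¹ * ∑ i ∈ range n, d i + c) atTop (𝓝 c) := by
    simpa using hd.add_const c
  rw [← hlim.limsup_eq]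
  refine limsup_le_limsup ?_ (isCoboundedUnder_le_of_le atTop (x := 0) fun n ↦ ?_)
    hlim.isBoundedUnder_le
  · filter_upwards [eventually_ne_atTop 0] with n hn
    calc (n : ℝ)⁻¹ * ∑ i ∈ range n, a i ≤ (n : ℝ)⁻¹ * ∑ i ∈ range n, (d i + c) := by
          gcongr with i
          exact had i
      _ = (n : ℝ)⁻¹ * ∑ i ∈ range n, d i + c := by
          rw [sum_add_distrib, sum_const, card_range, nsmul_eq_mul, mul_add, ← mul_assoc,
            inv_mul_cancel₀ (Nat.cast_ne_zero.2 hn), one_mul]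
  · exact mul_nonneg (by positivity) (sum_nonneg fun i _ ↦ ha i)

theorem integral_mul_eq_zero_of_condExp_eq_zero {Ω : Type*} {m mΩ : MeasurableSpace Ω}
    {μ : Measure Ω} (hm : m ≤ mΩ) [SigmaFinite (μ.trim hm)] {g f : Ω → ℝ}
    (hg : StronglyMeasurable[m] g) (hgf : Integrable (g * f) μ) (hf : Integrable f μ)
    (h : μ[f|m] =ᵐ[μ] 0) :
    ∫ ω, (g * f) ω ∂μ = 0 := by
  have hpull : μ[g * f|m] =ᵐ[μ] 0 := by
    filter_upwards [condExp_mul_of_stronglyMeasurable_left hg hgf hf, h] with ω h1 h2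
    simp [h1, h2]
  rw [← integral_condExp hm, integral_congr_ae hpull]
  simp

namespace MeasureTheory.Martingale

variable {Ω : Type*} {mΩ : MeasurableSpace Ω} {μ : Measure Ω} {ℱ : Filtration ℕ mΩ}
  {f : ℕ → Ω → ℝ}

theorem condExp_sub_eq_zero [SigmaFiniteFiltration μ ℱ] (hf : Martingale f ℱ μ) (n : ℕ) :
    μ[f (n + 1) - f n|ℱ n] =ᵐ[μ] 0 := by
  filter_upwards [condExp_sub (hf.integrable (n + 1)) (hf.integrable n) (ℱ n),
    hf.condExp_ae_eq n.le_succ] with ω hsub hmart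
  rw [hsub, Pi.sub_apply, hmart,
    condExp_of_stronglyMeasurable (ℱ.le n) (hf.stronglyAdapted n) (hf.integrable n), Pi.zero_apply,
    sub_self]

theorem integral_sq_succ [SigmaFiniteFiltration μ ℱ] (hf : Martingale f ℱ μ) {n : ℕ}
    (hn : MemLp (f n) 2 μ) (hn1 : MemLp (f (n + 1)) 2 μ) :
    ∫ ω, f (n + 1) ω ^ 2 ∂μ = ∫ ω, f n ω ^ 2 ∂μ + ∫ ω, (f (n + 1) ω - f n ω) ^ 2 ∂μ := by
  set Δ := f (n + 1) - f n
  have hΔ : MemLp Δ 2 μ := hn1.sub hn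
  have hcross : ∫ ω, (f n * Δ) ω ∂μ = 0 :=
    integral_mul_eq_zero_of_condExp_eq_zero (ℱ.le n) (hf.stronglyAdapted n)
      (hn.integrable_mul hΔ) ((hf.integrable (n + 1)).sub (hf.integrable n))
      (hf.condExp_sub_eq_zero n)
  have hexpand : (fun ω ↦ f (n + 1) ω ^ 2) = fun ω ↦ f n ω ^ 2 + 2 * (f n * Δ) ω + Δ ω ^ 2 := by
    funext ω
    simp only [Δ, Pi.mul_apply, Pi.sub_apply]
    ring
  have hsq := hn.integrable_sq
  have hmul := (hn.integrable_mul hΔ).const_mul 2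
  rw [hexpand, integral_add (hsq.fun_add hmul) hΔ.integrable_sq, integral_add hsq hmul,
    integral_const_mul, hcross, mul_zero, add_zero]
  rfl

theorem ae_exists_tendsto_of_integral_sq_le [IsProbabilityMeasure μ] (hf : Martingale f ℱ μ)
    (hL2 : ∀ n, MemLp (f n) 2 μ) {R : ℝ} (hR : ∀ n, ∫ ω, f n ω ^ 2 ∂μ ≤ R) :
    ∀ᵐ ω ∂μ, ∃ l, Tendsto (fun n ↦ f n ω) atTop (𝓝 l) := by
  refine hf.submartingale.exists_ae_tendsto_of_bdd (R := (1 + R).toNNReal) fun n ↦ ?_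
  have hL1 : ∫ ω, ‖f n ω‖ ∂μ ≤ 1 + R :=
    calc ∫ ω, ‖f n ω‖ ∂μ ≤ ∫ ω, (1 + f n ω ^ 2) ∂μ :=
          integral_mono (hf.integrable n).norm ((integrable_const 1).add (hL2 n).integrable_sq)
            fun ω ↦ by
              rw [Real.norm_eq_abs]
              nlinarith [sq_abs (f n ω), abs_nonneg (f n ω)]
      _ = 1 + ∫ ω, f n ω ^ 2 ∂μ := by
          rw [integral_add (integrable_const 1) (hL2 n).integrable_sq]
          simp
      _ ≤ 1 + R := by linarith [hR n]
  rw [eLpNorm_one_eq_lintegral_enorm, ← ofReal_integral_norm_eq_lintegral_enorm (hf.integrable n)]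
  exact ENNReal.ofReal_le_ofReal hL1

theorem ae_exists_tendsto_of_abs_sub_le [IsProbabilityMeasure μ] (hf : Martingale f ℱ μ)
    (h0 : MemLp (f 0) 2 μ) {b : ℕ → ℝ} (hb : Summable fun n ↦ b n ^ 2)
    (hinc : ∀ n, ∀ᵐ ω ∂μ, |f (n + 1) ω - f n ω| ≤ b n) :
    ∀ᵐ ω ∂μ, ∃ l, Tendsto (fun n ↦ f n ω) atTop (𝓝 l) := by
  have hΔ : ∀ n, MemLp (f (n + 1) - f n) 2 μ := fun n ↦
    (memLp_top_of_bound ((hf.integrable (n + 1)).sub (hf.integrable n)).aestronglyMeasurable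
      (b n) (hinc n)).mono_exponent le_top
  have hL2 : ∀ n, MemLp (f n) 2 μ := by
    intro n
    induction n with
    | zero => exact h0
    | succ n ih => simpa using ih.add (hΔ n)
  have hsq : ∀ n, ∫ ω, f n ω ^ 2 ∂μ ≤ ∫ ω, f 0 ω ^ 2 ∂μ + ∑ i ∈ range n, b i ^ 2 := by
    intro n
    induction n with
    | zero => simp
    | succ n ih =>
      have hstep : ∫ ω, (f (n + 1) ω - f n ω) ^ 2 ∂μ ≤ b n ^ 2 :=
        calc ∫ ω, (f (n + 1) ω - f n ω) ^ 2 ∂μ ≤ ∫ _, b n ^ 2 ∂μ :=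
              integral_mono_ae (hΔ n).integrable_sq (integrable_const _)
                ((hinc n).mono fun ω h ↦ sq_le_sq' (abs_le.1 h).1 (abs_le.1 h).2)
          _ = b n ^ 2 := by simp
      rw [hf.integral_sq_succ (hL2 n) (hL2 (n + 1)), sum_range_succ]
      linarith
  exact hf.ae_exists_tendsto_of_integral_sq_le hL2 fun n ↦
    (hsq n).trans (add_le_add le_rfl (hb.sum_le_tsum _ fun i _ ↦ sq_nonneg (b i)))

end MeasureTheory.Martingale

section

variable {Ω : Type*} {mΩ : MeasurableSpace Ω} {μ : Measure Ω} {ℱ : Filtration ℕ mΩ}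
  {X : ℕ → Ω → ℝ}

theorem martingale_sum_mul_sub_condExp [IsFiniteMeasure μ] (hX : StronglyAdapted ℱ X)
    (hint : ∀ n, Integrable (X n) μ) (w : ℕ → ℝ) :
    Martingale (fun n ω ↦ ∑ i ∈ range n, w i * (X (i + 1) ω - μ[X (i + 1)|ℱ i] ω)) ℱ μ := by
  refine martingale_of_condExp_sub_eq_zero_nat (fun n ↦ ?_) (fun n ↦ ?_) (fun n ↦ ?_)
  · refine stronglyMeasurable_fun_sum _ fun i hi ↦ ?_
    have hin : i + 1 ≤ n := mem_range.1 hi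
    exact (((hX (i + 1)).mono (ℱ.mono hin)).sub
      (stronglyMeasurable_condExp.mono (ℱ.mono (by omega)))).const_mul _
  · exact integrable_finsetSum _ fun i _ ↦ ((hint _).sub integrable_condExp).const_mul _
  · have hinc : (fun ω ↦ ∑ i ∈ range (n + 1), w i * (X (i + 1) ω - μ[X (i + 1)|ℱ i] ω)) -
        (fun ω ↦ ∑ i ∈ range n, w i * (X (i + 1) ω - μ[X (i + 1)|ℱ i] ω)) =
        w n • (X (n + 1) - μ[X (n + 1)|ℱ n]) := by
      funext ω
      simp [sum_range_succ]
    rw [hinc]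
    filter_upwards [condExp_smul (w n) (X (n + 1) - μ[X (n + 1)|ℱ n]) (ℱ n),
      condExp_sub (hint (n + 1)) integrable_condExp (ℱ n)] with ω hsmul hsub
    rw [hsmul, Pi.smul_apply, hsub, Pi.sub_apply,
      condExp_of_stronglyMeasurable (ℱ.le n) stronglyMeasurable_condExp integrable_condExp,
      sub_self, smul_zero, Pi.zero_apply]

theorem ae_tendsto_cesaro_sub_condExp [IsProbabilityMeasure μ] (hX : StronglyAdapted ℱ X)
    {R : ℝ} (hbdd : ∀ n, ∀ᵐ ω ∂μ, |X n ω| ≤ R) :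
    ∀ᵐ ω ∂μ, Tendsto (fun n : ℕ ↦ (n : ℝ)⁻¹ * ∑ i ∈ range n, (X (i + 1) ω - μ[X (i + 1)|ℱ i] ω))
      atTop (𝓝 0) := by
  have hint : ∀ n, Integrable (X n) μ := fun n ↦
    .of_bound ((hX n).mono (ℱ.le n)).aestronglyMeasurable R (hbdd n)
  set M : ℕ → Ω → ℝ := fun n ω ↦
    ∑ i ∈ range n, ((i : ℝ) + 1)⁻¹ * (X (i + 1) ω - μ[X (i + 1)|ℱ i] ω)
  have hM : Martingale M ℱ μ := martingale_sum_mul_sub_condExp hX hint _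
  have hinc : ∀ n, ∀ᵐ ω ∂μ, |M (n + 1) ω - M n ω| ≤ 2 * R * ((n : ℝ) + 1)⁻¹ := by
    intro n
    filter_upwards [hbdd (n + 1), ae_bdd_abs_condExp_of_ae_bdd_abs (m := ℱ n) (hbdd (n + 1))]
      with ω hXn hcond
    simp only [M, sum_range_succ, add_sub_cancel_left, abs_mul, abs_inv]
    rw [abs_of_pos (by positivity), mul_comm]
    gcongr
    linarith [abs_sub (X (n + 1) ω) (μ[X (n + 1)|ℱ n] ω)]
  have hsum : Summable fun n : ℕ ↦ (2 * R * ((n : ℝ) + 1)⁻¹) ^ 2 := by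
    refine (((summable_nat_add_iff 1).2 (Real.summable_one_div_nat_pow.2 one_lt_two)).mul_left
      ((2 * R) ^ 2)).congr fun n ↦ ?_
    push_cast
    rw [one_div, ← inv_pow, ← mul_pow]
  filter_upwards [hM.ae_exists_tendsto_of_abs_sub_le (by simp [M]) hsum hinc] with ω ⟨l, hl⟩
  exact tendsto_cesaro_zero_of_tendsto_sum_div_succ (l := l)
    (by simpa [M, div_eq_inv_mul] using hl)

end

/-- Time-domain validity of bounded online e-values: if `(e_n)_{n≥1}` are
nonnegative, adapted to a filtration `(F_n)`, uniformly bounded by `C`, and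
`E[e_n | F_{n-1}] ≤ 1` a.s. for every `n ≥ 1`, then almost surely
`limsup_n (1/n) ∑_{i=1}^n e_i ≤ 1`. -/
theorem online_evalues_time_validity
    {Ω : Type*} {mΩ : MeasurableSpace Ω} (μ : Measure Ω) [IsProbabilityMeasure μ]
    (ℱ : Filtration ℕ mΩ) (e : ℕ → Ω → ℝ)
    (hadapted : Adapted ℱ e)
    (hnonneg : ∀ n ω, 0 ≤ e n ω)
    (C : ℝ) (hbdd : ∀ n ω, e n ω ≤ C)
    (hcond : ∀ n, 1 ≤ n → μ[e n | ℱ (n - 1)] ≤ᵐ[μ] fun _ => 1) :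
    ∀ᵐ ω ∂μ, limsup (fun n : ℕ =>
      (1 / (n : ℝ)) * ∑ i ∈ Finset.Icc 1 n, e i ω) atTop ≤ 1 := by
  have hcond_le_one : ∀ᵐ ω ∂μ, ∀ i, μ[e (i + 1)|ℱ i] ω ≤ 1 :=
    ae_all_iff.2 fun i ↦ by simpa [EventuallyLE] using hcond (i + 1) (by omega)
  have habs_le : ∀ n, ∀ᵐ ω ∂μ, |e n ω| ≤ C := fun n ↦ ae_of_all _ fun ω ↦ by
    rw [abs_of_nonneg (hnonneg n ω)]
    exact hbdd n ω
  filter_upwards [ae_tendsto_cesaro_sub_condExp hadapted.stronglyAdapted habs_le, hcond_le_one]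
    with ω hlim hω
  have hshift : ∀ n, ∑ i ∈ Icc 1 n, e i ω = ∑ i ∈ range n, e (i + 1) ω := fun n ↦ by
    rw [range_eq_Ico, sum_Ico_add' (e · ω) 0 n 1]
    rfl
  simp only [one_div, hshift]
  exact limsup_cesaro_le_of_le_add (fun i ↦ hnonneg _ ω) (fun i ↦ by linarith [hω i]) hlim
end
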